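/- Suppose K has characteristic p for a prime number p. Let H be the nr×nr block matrix with identity blocks 1_n on the diagonal, blocks −1_n on the superdiagonal, and zero blocks elsewhere; let T̂ be the block diagonal matrix whose i-th diagonal block is t_i·1_n; and let G be the nr×nr block matrix that is zero outside its last block row and whose (r, k) block equals ∑_{j=1}^{k} (t − t_j)^{-1} A_j. Then the p-th iterated matrices satisfy G_p = H·(t·1 − T̂) · (D^{−1})_p · (H·(t·1 − T̂))^{-1}, where D^{−1} is the naive convolution matrix with parameter μ = −1. -/
import Mathlib
set_option linter.unusedSectionVars false
set_option maxRecDepth 10000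


/-- The iterated matrices of the system `Y' = C Y`: `iterMat d C 0 = C₁ = C` and
`iterMat d C m = C_{m+1} = ∂(C_m) + C_m · C`, where `∂ = d` is applied entrywise. -/
def iterMat {K : Type*} [Field K] {ι : Type*} [Fintype ι] [DecidableEq ι]
    (d : K → K) (C : Matrix ι ι K) : ℕ → Matrix ι ι K
  | 0 => C
  | m + 1 => (iterMat d C m).map d + iterMat d C m * C

/-- The block matrix `B_k^μ`: zero outside the `k`-th block row, with `k`-th block row
`(A_1, …, A_{k-1}, A_k + μ·1, A_{k+1}, …, A_r)`. -/
def convBlock {K : Type*} [Field K] {n r : ℕ}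
    (A : Fin r → Matrix (Fin n) (Fin n) K) (μ : K) (k : Fin r) :
    Matrix (Fin r × Fin n) (Fin r × Fin n) K :=
  fun p q =>
    if p.1 = k then A q.1 p.2 q.2 + (if q.1 = k ∧ p.2 = q.2 then μ else 0) else 0

/-- The block matrix `H` with identity blocks on the diagonal, `-1` blocks on the
superdiagonal and zero blocks elsewhere. -/
def Hmat {K : Type*} [Field K] (n r : ℕ) :
    Matrix (Fin r × Fin n) (Fin r × Fin n) K :=
  fun p q =>
    if p.1 = q.1 ∧ p.2 = q.2 then 1
    else if q.1.val = p.1.val + 1 ∧ p.2 = q.2 then -1 else 0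

/-- The matrix `G`: zero outside the last block row, with `(r,k)`-block
`∑_{j=1}^{k} (t - t_j)⁻¹ A_j`. -/
def Gmat {K : Type*} [Field K] {n r : ℕ} (t : K) (ts : Fin r → K)
    (A : Fin r → Matrix (Fin n) (Fin n) K) :
    Matrix (Fin r × Fin n) (Fin r × Fin n) K :=
  fun p q =>
    if p.1.val = r - 1 then
      ∑ j ∈ Finset.univ.filter (fun j : Fin r => j ≤ q.1), (t - ts j)⁻¹ * A j p.2 q.2
    else 0


section Deriv
variable {K : Type*} [Field K] (d : K → K)
  (hd_add : ∀ a b : K, d (a + b) = d a + d b)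
  (hd_mul : ∀ a b : K, d (a * b) = a * d b + d a * b)
include hd_add hd_mul

lemma d_zero' : d 0 = 0 := by
  have h := hd_add 0 0
  rw [add_zero] at h
  have h2 : d 0 + 0 = d 0 + d 0 := by rw [add_zero]; exact h
  exact (add_left_cancel h2).symm

lemma d_one' : d 1 = 0 := by
  have h := hd_mul 1 1
  rw [mul_one, one_mul, mul_one] at h
  have h2 : d 1 + 0 = d 1 + d 1 := by rw [add_zero]; exact h
  exact (add_left_cancel h2).symm

lemma d_neg' (a : K) : d (-a) = - d a := by
  have h : d (a + (-a)) = d a + d (-a) := hd_add a (-a)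
  rw [add_neg_cancel, d_zero' d hd_add hd_mul] at h
  linear_combination -h

lemma d_natCast' (m : ℕ) : d (m : K) = 0 := by
  induction m with
  | zero => simpa using d_zero' d hd_add hd_mul
  | succ k ih => push_cast; rw [hd_add, ih, d_one' d hd_add hd_mul, add_zero]

variable {ι : Type*} [Fintype ι] [DecidableEq ι]

lemma dmap_add (M N : Matrix ι ι K) : (M + N).map d = M.map d + N.map d := by
  ext p q; simp [Matrix.map_apply, hd_add]

lemma dmap_mul (M N : Matrix ι ι K) :
    (M * N).map d = M.map d * N + M * N.map d := by
  ext p q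
  simp only [Matrix.map_apply, Matrix.mul_apply, Matrix.add_apply]
  have hsum : d (∑ j, M p j * N j q) = ∑ j, d (M p j * N j q) := by
    exact map_sum (AddMonoidHom.mk' d hd_add) _ _
  rw [hsum]
  rw [← Finset.sum_add_distrib]
  refine Finset.sum_congr rfl fun j _ => ?_
  rw [hd_mul]; ring

lemma dmap_smul (c : K) (hc : d c = 0) (M : Matrix ι ι K) :
    (c • M).map d = c • M.map d := by
  ext p q
  simp only [Matrix.map_apply, Matrix.smul_apply, smul_eq_mul]
  rw [hd_mul, hc]; ring

lemma dmap_one : (1 : Matrix ι ι K).map d = 0 := by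
  ext p q
  by_cases h : p = q <;>
    simp [Matrix.map_apply, Matrix.one_apply, h, d_one' d hd_add hd_mul, d_zero' d hd_add hd_mul]

/-- Iteration of `M ↦ ∂M + M·D` starting at `M`. -/
def tauIt (D M : Matrix ι ι K) : ℕ → Matrix ι ι K
  | 0 => M
  | m + 1 => (tauIt D M m).map d + tauIt D M m * D

lemma iterMat_eq_tauIt (C : Matrix ι ι K) (m : ℕ) :
    iterMat d C m = tauIt d C 1 (m + 1) := by
  induction m with
  | zero => simp [iterMat, tauIt, dmap_one d hd_add hd_mul]
  | succ k ih => simp only [iterMat, tauIt, ih]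

lemma gauge_main1 (G D P H : Matrix ι ι K) (hGP : G * P = P * D + H)
    (hPd : P.map d = H) (m : ℕ) :
    iterMat d G m * P = tauIt d D P (m + 1) := by
  induction m with
  | zero =>
    show G * P = P.map d + P * D
    rw [hGP, hPd, add_comm]
  | succ k ih =>
    show ((iterMat d G k).map d + iterMat d G k * G) * P = (tauIt d D P (k+1)).map d + tauIt d D P (k+1) * D
    rw [← ih, dmap_mul d hd_add hd_mul, hPd, add_mul, mul_assoc, hGP, mul_add, mul_assoc]
    abel

lemma gauge_main2 (D P H : Matrix ι ι K) (hPd : P.map d = H) (hHd : H.map d = 0) (m : ℕ) :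
    tauIt d D P (m + 1) =
      P * tauIt d D 1 (m + 1) + ((m + 1 : ℕ) : K) • (H * tauIt d D 1 m) := by
  induction m with
  | zero =>
    show P.map d + P * D = P * ((1 : Matrix ι ι K).map d + 1 * D) + _
    rw [hPd, dmap_one d hd_add hd_mul, zero_add, one_mul]
    show H + P * D = P * D + ((1:ℕ):K) • (H * 1)
    simp [add_comm]
  | succ k ih =>
    show (tauIt d D P (k+1)).map d + tauIt d D P (k+1) * D = _
    rw [ih]
    have hc : d (((k + 1 : ℕ) : K)) = 0 := d_natCast' d hd_add hd_mul _
    rw [dmap_add d hd_add hd_mul, dmap_mul d hd_add hd_mul,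
      dmap_smul d hd_add hd_mul _ hc, dmap_mul d hd_add hd_mul, hPd, hHd, zero_mul, zero_add]
    have hQ : (tauIt d D 1 (k+1)).map d + tauIt d D 1 (k+1) * D = tauIt d D 1 (k+2) := rfl
    have hcast : (((k + 1 + 1 : ℕ) : K)) = ((k+1 : ℕ) : K) + 1 := by push_cast; ring
    rw [hcast, add_smul, one_smul]
    calc H * tauIt d D 1 (k+1) + P * (tauIt d D 1 (k+1)).map d +
          (((k+1:ℕ):K) • (H * (tauIt d D 1 k).map d)) +
          (P * tauIt d D 1 (k+1) + ((k+1:ℕ):K) • (H * tauIt d D 1 k)) * D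
        = P * ((tauIt d D 1 (k+1)).map d + tauIt d D 1 (k+1) * D) +
          (((k+1:ℕ):K) • (H * ((tauIt d D 1 k).map d + tauIt d D 1 k * D)) +
           H * tauIt d D 1 (k+1)) := by
          rw [add_mul, smul_mul_assoc, mul_add, mul_add, smul_add, mul_assoc]
          simp only [mul_assoc]
          abel
      _ = _ := by
          rw [hQ, show (tauIt d D 1 k).map d + tauIt d D 1 k * D = tauIt d D 1 (k+1) from rfl]

end Deriv

section Entries
variable {K : Type*} [Field K]

lemma sum_filter_val_eq {M : Type*} [AddCommMonoid M] {r : ℕ} (m : ℕ) (F : Fin r → M) :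
    ∑ j ∈ Finset.univ.filter (fun j : Fin r => j.val = m), F j =
      if h : m < r then F ⟨m, h⟩ else 0 := by
  split_ifs with h
  · have hs : Finset.univ.filter (fun j : Fin r => j.val = m) = {⟨m, h⟩} := by
      ext j; simp [Fin.ext_iff]
    rw [hs, Finset.sum_singleton]
  · have hs : Finset.univ.filter (fun j : Fin r => j.val = m) = ∅ := by
      ext j; simp; omega
    rw [hs, Finset.sum_empty]

/-- The diagonal matrix `t·1 - T̂`. -/
def Smat (K : Type*) [Field K] (n r : ℕ) (t : K) (ts : Fin r → K) :
    Matrix (Fin r × Fin n) (Fin r × Fin n) K :=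
  Matrix.diagonal (fun q => t - ts q.1)

lemma S_eq {n r : ℕ} (t : K) (ts : Fin r → K) :
    t • (1 : Matrix (Fin r × Fin n) (Fin r × Fin n) K) -
      Matrix.diagonal (fun q : Fin r × Fin n => ts q.1) = Smat K n r t ts := by
  ext p q
  rcases eq_or_ne p q with h | h
  · subst h; simp [Smat]
  · simp [Smat, Matrix.one_apply_ne h, Matrix.diagonal_apply_ne _ h]

lemma D_apply {n r : ℕ} (t : K) (ts : Fin r → K) (A : Fin r → Matrix (Fin n) (Fin n) K)
    (j k : Fin r) (c b : Fin n) :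
    (∑ m, (t - ts m)⁻¹ • convBlock A (-1 : K) m) (j, c) (k, b)
      = (t - ts j)⁻¹ * (A k c b + if k = j ∧ c = b then -1 else 0) := by
  rw [Matrix.sum_apply]
  simp only [Matrix.smul_apply, convBlock, smul_eq_mul, mul_ite, mul_zero]
  rw [Finset.sum_ite_eq Finset.univ j
    (fun m => (t - ts m)⁻¹ * (A k c b + if k = m ∧ c = b then -1 else 0))]
  simp

lemma HS_apply {n r : ℕ} (t : K) (ts : Fin r → K) (p q : Fin r × Fin n) :
    ((Hmat n r : Matrix (Fin r × Fin n) (Fin r × Fin n) K) * Smat K n r t ts) p q =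
      Hmat n r p q * (t - ts q.1) :=
  Matrix.mul_diagonal _ _ _ _

end Entries

section Entries2
variable {K : Type*} [Field K]

lemma GH_apply {n r : ℕ} (t : K) (ts : Fin r → K) (A : Fin r → Matrix (Fin n) (Fin n) K)
    (i k : Fin r) (a b : Fin n) :
    (Gmat t ts A * (Hmat n r : Matrix (Fin r × Fin n) (Fin r × Fin n) K)) (i, a) (k, b)
      = if i.val = r - 1 then (t - ts k)⁻¹ * A k a b else 0 := by
  rw [Matrix.mul_apply, Fintype.sum_prod_type]
  by_cases hi : i.val = r - 1
  case neg => simp [Gmat, hi]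
  rw [if_pos hi]
  have hterm : ∀ j : Fin r, (∑ c, Gmat t ts A (i, a) (j, c) * Hmat n r (j, c) (k, b))
      = (if j = k then (∑ l ∈ Finset.univ.filter (fun l : Fin r => l ≤ j),
            (t - ts l)⁻¹ * A l a b) else 0)
        + (if k.val = j.val + 1 then -(∑ l ∈ Finset.univ.filter (fun l : Fin r => l ≤ j),
            (t - ts l)⁻¹ * A l a b) else 0) := by
    intro j
    by_cases hjk : j = k
    · have h2 : ¬ (k.val = j.val + 1) := by subst hjk; omega
      simp [Gmat, Hmat, hjk, h2, hi, mul_ite, Finset.sum_ite_eq']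
    · by_cases hk1 : k.val = j.val + 1
      · simp [Gmat, Hmat, hjk, hk1, hi, mul_ite, Finset.sum_ite_eq',
          Finset.sum_neg_distrib]
      · simp [Gmat, Hmat, hjk, hk1, hi]
  rw [Finset.sum_congr rfl (fun j _ => hterm j), Finset.sum_add_distrib,
    Finset.sum_ite_eq' Finset.univ k, ← Finset.sum_filter]
  simp only [Finset.mem_univ, if_pos]
  by_cases hk0 : k.val = 0
  · have hfe : Finset.univ.filter (fun j : Fin r => k.val = j.val + 1) = ∅ := by
      ext j; simp; omega
    have hle : Finset.univ.filter (fun l : Fin r => l ≤ k) = {k} := by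
      ext l
      simp only [Finset.mem_filter, Finset.mem_univ, true_and, Finset.mem_singleton,
        Fin.le_def, Fin.ext_iff]
      omega
    simp [hfe, hle]
  · have hkr : k.val < r := k.isLt
    have hfe : Finset.univ.filter (fun j : Fin r => k.val = j.val + 1)
        = {(⟨k.val - 1, by omega⟩ : Fin r)} := by
      ext j
      simp only [Finset.mem_filter, Finset.mem_univ, true_and, Finset.mem_singleton,
        Fin.ext_iff]
      omega
    have hle : Finset.univ.filter (fun l : Fin r => l ≤ k)
        = insert k (Finset.univ.filter (fun l : Fin r =>
            l ≤ (⟨k.val - 1, by omega⟩ : Fin r))) := by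
      ext l
      simp only [Finset.mem_filter, Finset.mem_univ, true_and, Finset.mem_insert,
        Fin.le_def, Fin.ext_iff]
      omega
    have hni : k ∉ Finset.univ.filter (fun l : Fin r =>
        l ≤ (⟨k.val - 1, by omega⟩ : Fin r)) := by
      simp only [Finset.mem_filter, Finset.mem_univ, true_and, Fin.le_def]
      omega
    rw [hfe, Finset.sum_singleton, hle, Finset.sum_insert hni]
    ring

end Entries2

section Entries3
variable {K : Type*} [Field K]

lemma HSD_apply {n r : ℕ} (t : K) (ts : Fin r → K) (htne : ∀ i, t ≠ ts i)
    (A : Fin r → Matrix (Fin n) (Fin n) K) (i k : Fin r) (a b : Fin n) :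
    ((Hmat n r : Matrix (Fin r × Fin n) (Fin r × Fin n) K) * Smat K n r t ts *
        (∑ m, (t - ts m)⁻¹ • convBlock A (-1 : K) m)) (i, a) (k, b)
      = (A k a b + (if k = i ∧ a = b then -1 else 0))
        - (if i.val + 1 < r then
            A k a b + (if k.val = i.val + 1 ∧ a = b then -1 else 0) else 0) := by
  rw [Matrix.mul_apply, Fintype.sum_prod_type]
  have hterm : ∀ (j : Fin r) (c : Fin n),
      ((Hmat n r : Matrix (Fin r × Fin n) (Fin r × Fin n) K) * Smat K n r t ts) (i, a) (j, c)
        * (∑ m, (t - ts m)⁻¹ • convBlock A (-1 : K) m) (j, c) (k, b)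
      = Hmat n r (i, a) (j, c) * (A k c b + if k = j ∧ c = b then -1 else 0) := by
    intro j c
    rw [HS_apply, D_apply, mul_assoc, ← mul_assoc (t - ts j),
      mul_inv_cancel₀ (sub_ne_zero.mpr (htne j)), one_mul]
  rw [Finset.sum_congr rfl (fun j _ => Finset.sum_congr rfl (fun c _ => hterm j c))]
  have hinner : ∀ j : Fin r,
      (∑ c, Hmat n r (i, a) (j, c) * (A k c b + if k = j ∧ c = b then -1 else 0))
      = (if i = j then A k a b + (if k = j ∧ a = b then -1 else 0) else 0)
        + (if j.val = i.val + 1 then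
            -(A k a b + (if k = j ∧ a = b then -1 else 0)) else 0) := by
    intro j
    by_cases hij : i = j
    · have h2 : ¬ (j.val = i.val + 1) := by subst hij; omega
      simp [Hmat, hij, h2, ite_mul, Finset.sum_ite_eq]
    · by_cases hj1 : j.val = i.val + 1
      · simp [Hmat, hij, hj1, ite_mul, Finset.sum_ite_eq]
      · simp [Hmat, hij, hj1]
  rw [Finset.sum_congr rfl (fun j _ => hinner j), Finset.sum_add_distrib,
    Finset.sum_ite_eq Finset.univ i, ← Finset.sum_filter, sum_filter_val_eq]
  simp only [Finset.mem_univ, if_pos]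
  by_cases h : i.val + 1 < r
  · rw [dif_pos h, if_pos h]
    have e : (if k = (⟨i.val + 1, h⟩ : Fin r) ∧ a = b then (-1 : K) else 0)
        = (if k.val = i.val + 1 ∧ a = b then -1 else 0) := by
      by_cases h1 : k.val = i.val + 1 <;> by_cases h2 : a = b <;>
        simp [h1, h2, Fin.ext_iff]
    rw [e]; ring
  · rw [dif_neg h, if_neg h]
    ring

end Entries3

section Key
variable {K : Type*} [Field K]

lemma key_identity {n r : ℕ} (t : K) (ts : Fin r → K) (htne : ∀ i, t ≠ ts i)
    (A : Fin r → Matrix (Fin n) (Fin n) K) :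
    Gmat t ts A * ((Hmat n r : Matrix (Fin r × Fin n) (Fin r × Fin n) K) * Smat K n r t ts)
      = Hmat n r * Smat K n r t ts * (∑ m, (t - ts m)⁻¹ • convBlock A (-1 : K) m)
        + Hmat n r := by
  ext ⟨i, a⟩ ⟨k, b⟩
  rw [← mul_assoc, Matrix.add_apply, HSD_apply t ts htne A i k a b]
  have hL : (Gmat t ts A * (Hmat n r : Matrix (Fin r × Fin n) (Fin r × Fin n) K)
        * Smat K n r t ts) ((i, a)) ((k, b))
      = (Gmat t ts A * (Hmat n r : Matrix (Fin r × Fin n) (Fin r × Fin n) K)) (i, a) (k, b)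
        * (t - ts k) := Matrix.mul_diagonal _ _ _ _
  rw [hL, GH_apply]
  have hHe : Hmat n r (i, a) (k, b)
      = if i = k ∧ a = b then (1 : K) else if k.val = i.val + 1 ∧ a = b then -1 else 0 := rfl
  rw [hHe]
  have hik : i.val < r := i.isLt
  have hkk : k.val < r := k.isLt
  by_cases hi : i.val = r - 1
  · have h2 : ¬ (i.val + 1 < r) := by omega
    have h3 : ¬ (k.val = i.val + 1) := by omega
    rw [if_pos hi, if_neg h2]
    have hne : t - ts k ≠ 0 := sub_ne_zero.mpr (htne k)
    rw [mul_comm ((t - ts k)⁻¹) (A k a b), mul_assoc, inv_mul_cancel₀ hne, mul_one]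
    by_cases h4 : i = k <;> by_cases h5 : a = b <;>
      simp [h4, h5, h3, eq_comm] <;> ring
  · have h2 : i.val + 1 < r := by omega
    rw [if_neg hi, if_pos h2]
    by_cases h4 : i = k <;> by_cases h5 : a = b <;> by_cases h6 : k.val = i.val + 1 <;>
      first
      | (exfalso; subst h4; omega)
      | (simp [h4, h5, h6, eq_comm] <;> ring)

end Key

section Unit
variable {K : Type*} [Field K]

/-- The strictly upper block matrix `X` with `1` blocks on the superdiagonal. -/
def supX (K : Type*) [Field K] (n r : ℕ) : Matrix (Fin r × Fin n) (Fin r × Fin n) K :=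
  fun p q => if q.1.val = p.1.val + 1 ∧ p.2 = q.2 then 1 else 0

lemma Hmat_eq_one_sub {n r : ℕ} :
    (Hmat n r : Matrix (Fin r × Fin n) (Fin r × Fin n) K) = 1 - supX K n r := by
  ext ⟨i, a⟩ ⟨k, b⟩
  simp only [Hmat, supX, Matrix.sub_apply, Matrix.one_apply, Prod.mk.injEq, Prod.ext_iff]
  by_cases h1 : i = k ∧ a = b
  · have : ¬ (k.val = i.val + 1 ∧ a = b) := by
      rintro ⟨h, -⟩; rw [h1.1] at h; omega
    simp [h1, this]
  · by_cases h2 : k.val = i.val + 1 ∧ a = b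
    · have hik : i ≠ k := by rintro rfl; omega
      simp [h1, h2, hik]
    · simp [h1, h2]

lemma supX_pow_apply_eq_zero {n r : ℕ} :
    ∀ (m : ℕ) (p q : Fin r × Fin n), q.1.val ≠ p.1.val + m →
      ((supX K n r) ^ m) p q = 0 := by
  intro m
  induction m with
  | zero =>
    intro p q h
    rw [pow_zero]
    have : p ≠ q := fun he => h (by rw [he, add_zero])
    exact Matrix.one_apply_ne this
  | succ m ih =>
    intro p q h
    rw [pow_succ, Matrix.mul_apply]
    apply Finset.sum_eq_zero
    intro j _
    by_cases hj : q.1.val = j.1.val + 1 ∧ j.2 = q.2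
    · have : ((supX K n r) ^ m) p j = 0 := ih p j (by omega)
      rw [this, zero_mul]
    · have : supX K n r j q = 0 := by simp [supX, hj]
      rw [this, mul_zero]

lemma supX_pow_r {n r : ℕ} : (supX K n r) ^ r = 0 := by
  ext p q
  rw [Matrix.zero_apply]
  exact supX_pow_apply_eq_zero r p q (by have := q.1.isLt; omega)

lemma Hmat_isUnit_det {n r : ℕ} :
    IsUnit (Hmat n r : Matrix (Fin r × Fin n) (Fin r × Fin n) K).det := by
  apply Matrix.isUnit_det_of_left_inverse
    (B := ∑ i ∈ Finset.range r, (supX K n r) ^ i)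
  have hg := geom_sum_mul (supX K n r) r
  rw [supX_pow_r] at hg
  rw [Hmat_eq_one_sub]
  have : (∑ i ∈ Finset.range r, (supX K n r) ^ i) * (1 - supX K n r)
      = -((∑ i ∈ Finset.range r, (supX K n r) ^ i) * (supX K n r - 1)) := by
    rw [mul_sub, mul_sub, mul_one]; abel
  rw [this, hg]
  simp

lemma Smat_isUnit_det {n r : ℕ} (t : K) (ts : Fin r → K) (htne : ∀ i, t ≠ ts i) :
    IsUnit (Smat K n r t ts).det := by
  rw [Smat, Matrix.det_diagonal, isUnit_iff_ne_zero]
  rw [Finset.prod_ne_zero_iff]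
  exact fun q _ => sub_ne_zero.mpr (htne q.1)

lemma P_isUnit_det {n r : ℕ} (t : K) (ts : Fin r → K) (htne : ∀ i, t ≠ ts i) :
    IsUnit ((Hmat n r : Matrix (Fin r × Fin n) (Fin r × Fin n) K) * Smat K n r t ts).det := by
  rw [Matrix.det_mul]
  exact (Hmat_isUnit_det).mul (Smat_isUnit_det t ts htne)

end Unit

/-- In characteristic `p`, the `p`-th iterated matrices satisfy
`G_p = H·(t·1 - T̂) · (D^{-1})_p · (H·(t·1 - T̂))⁻¹`, where `D^{-1}` is the naive
convolution with parameter `μ = -1`. -/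
theorem pCurvature_G_conjugate_naive_convolution
    {K : Type*} [Field K] {p : ℕ} (hp : p.Prime) [CharP K p]
    (d : K → K) (hd_add : ∀ a b : K, d (a + b) = d a + d b)
    (hd_mul : ∀ a b : K, d (a * b) = a * d b + d a * b)
    {n r : ℕ} (t : K) (ht : d t = 1)
    (ts : Fin r → K) (hts : ∀ i, d (ts i) = 0)
    (hdist : Function.Injective ts) (htne : ∀ i, t ≠ ts i)
    (A : Fin r → Matrix (Fin n) (Fin n) K) (hA : ∀ i a b, d (A i a b) = 0) :
    iterMat d (Gmat t ts A) (p - 1) =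
      (Hmat n r * (t • (1 : Matrix (Fin r × Fin n) (Fin r × Fin n) K) -
          Matrix.diagonal (fun q : Fin r × Fin n => ts q.1))) *
        iterMat d (∑ k, (t - ts k)⁻¹ • convBlock A (-1 : K) k) (p - 1) *
        (Hmat n r * (t • (1 : Matrix (Fin r × Fin n) (Fin r × Fin n) K) -
          Matrix.diagonal (fun q : Fin r × Fin n => ts q.1)))⁻¹ := by
  rw [S_eq t ts]
  set D : Matrix (Fin r × Fin n) (Fin r × Fin n) K :=
    ∑ k, (t - ts k)⁻¹ • convBlock A (-1 : K) k with hD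
  set Pm : Matrix (Fin r × Fin n) (Fin r × Fin n) K :=
    (Hmat n r : Matrix (Fin r × Fin n) (Fin r × Fin n) K) * Smat K n r t ts with hPm
  have hHd : (Hmat n r : Matrix (Fin r × Fin n) (Fin r × Fin n) K).map d = 0 := by
    ext ⟨i, a⟩ ⟨k, b⟩
    rw [Matrix.map_apply, Matrix.zero_apply]
    show d (if i = k ∧ a = b then 1 else if k.val = i.val + 1 ∧ a = b then -1 else 0) = 0
    split_ifs
    · exact d_one' d hd_add hd_mul
    · rw [d_neg' d hd_add hd_mul, d_one' d hd_add hd_mul, neg_zero]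
    · exact d_zero' d hd_add hd_mul
  have hPd : Pm.map d = Hmat n r := by
    ext ⟨i, a⟩ ⟨k, b⟩
    rw [Matrix.map_apply, hPm, HS_apply, hd_mul]
    have dt : d (t - ts k) = 1 := by
      rw [sub_eq_add_neg, hd_add, ht, d_neg' d hd_add hd_mul, hts, neg_zero, add_zero]
    have dH : d (Hmat n r (i, a) (k, b) : K) = 0 := by
      show d (if i = k ∧ a = b then 1 else if k.val = i.val + 1 ∧ a = b then -1 else 0) = 0
      split_ifs
      · exact d_one' d hd_add hd_mul
      · rw [d_neg' d hd_add hd_mul, d_one' d hd_add hd_mul, neg_zero]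
      · exact d_zero' d hd_add hd_mul
    rw [dt, dH]; ring
  have hGP : Gmat t ts A * Pm = Pm * D + Hmat n r := key_identity t ts htne A
  have hu : IsUnit Pm.det := P_isUnit_det t ts htne
  have h1 := gauge_main1 d hd_add hd_mul (Gmat t ts A) D Pm (Hmat n r) hGP hPd (p - 1)
  have h2 := gauge_main2 d hd_add hd_mul D Pm (Hmat n r) hPd hHd (p - 1)
  have h3 : (((p - 1 + 1 : ℕ)) : K) = 0 := by
    rw [show p - 1 + 1 = p by have := hp.pos; omega]; exact CharP.cast_eq_zero K p
  have h4 : iterMat d (Gmat t ts A) (p - 1) * Pm = Pm * iterMat d D (p - 1) := by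
    rw [h1, h2, h3, zero_smul, add_zero, ← iterMat_eq_tauIt d hd_add hd_mul]
  calc iterMat d (Gmat t ts A) (p - 1)
      = iterMat d (Gmat t ts A) (p - 1) * (Pm * Pm⁻¹) := by
        rw [Matrix.mul_nonsing_inv _ hu, mul_one]
    _ = (iterMat d (Gmat t ts A) (p - 1) * Pm) * Pm⁻¹ := (mul_assoc _ _ _).symm
    _ = Pm * iterMat d D (p - 1) * Pm⁻¹ := by rw [h4]
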